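/- arXiv:1901.06333 — 2 statements merged into one kernel-verified Lean document; each statement's English description precedes it below -/
import Mathlib

section
/- Let α : D → ℝ^{n-1} be equivariant under invertible matrices preserving {xₙ = 0}, with D = {((p,q),(r,s)) : q·s ≤ 0, q ≠ s}, and suppose α((p,q),(r,s)) = A(q,s)·p + B(q,s)·r for matrix-valued functions A, B of (q,s). Then for any ((p,q),(r,s)) ∈ D with (p,q), (r,s) linearly dependent, α((p,q),(r,s)) = 0. -/
/-- The shear-scale map `(x, t) ↦ (x + t • k, t * l)` as a linear map. -/
noncomputable def shearMap (m : ℕ) (k : Fin m → ℝ) (l : ℝ) :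
    ((Fin m → ℝ) × ℝ) →ₗ[ℝ] ((Fin m → ℝ) × ℝ) where
  toFun v := (v.1 + v.2 • k, v.2 * l)
  map_add' v w := by
    ext i <;> simp [add_smul] <;> ring
  map_smul' c v := by
    ext i <;> simp [smul_smul] <;> ring

lemma shearMap_bij (m : ℕ) (k : Fin m → ℝ) (l : ℝ) (hl : l ≠ 0) :
    Function.Bijective (shearMap m k l) := by
  rw [Function.bijective_iff_has_inverse]
  refine ⟨fun v => (v.1 - (v.2 / l) • k, v.2 / l), ?_, ?_⟩
  · intro v
    simp [shearMap, mul_div_cancel_right₀ _ hl]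
  · intro v
    simp only [shearMap, LinearMap.coe_mk, AddHom.coe_mk]
    ext i <;> simp [div_mul_cancel₀ _ hl]

/-- An equivariant α of the form α((p,q),(r,s)) = A(q,s)p + B(q,s)r vanishes on linearly
dependent pairs in the sliding domain. -/
theorem stmt9 (m : ℕ)
    (α : ((Fin m → ℝ) × ℝ) → ((Fin m → ℝ) × ℝ) → (Fin m → ℝ))
    (A B : ℝ → ℝ → ((Fin m → ℝ) →ₗ[ℝ] (Fin m → ℝ)))
    (hequi : ∀ L : ((Fin m → ℝ) × ℝ) →ₗ[ℝ] ((Fin m → ℝ) × ℝ),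
      Function.Bijective L → (∀ v : (Fin m → ℝ) × ℝ, v.2 = 0 → (L v).2 = 0) →
      ∀ u₁ u₂ : (Fin m → ℝ) × ℝ, u₁.2 * u₂.2 ≤ 0 → u₁.2 ≠ u₂.2 →
        L (α u₁ u₂, 0) = (α (L u₁) (L u₂), 0))
    (hstruct : ∀ (p r : Fin m → ℝ) (q s : ℝ), q * s ≤ 0 → q ≠ s →
      α (p, q) (r, s) = A q s p + B q s r)
    (p r : Fin m → ℝ) (q s : ℝ) (hqs : q * s ≤ 0) (hne : q ≠ s)
    (hdep : ∃ a b : ℝ, (a ≠ 0 ∨ b ≠ 0) ∧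
      a • ((p, q) : (Fin m → ℝ) × ℝ) + b • ((r, s) : (Fin m → ℝ) × ℝ) = 0) :
    α (p, q) (r, s) = 0 := by
  obtain ⟨a, b, hab, heq⟩ := hdep
  have heq1 : a • p + b • r = 0 := congrArg Prod.fst heq
  have heq2 : a * q + b * s = 0 := congrArg Prod.snd heq
  -- find common direction (k, l) with l ≠ 0 and scalars c₁ c₂
  have main : ∃ (k : Fin m → ℝ) (l c₁ c₂ : ℝ), l ≠ 0 ∧
      p = c₁ • k ∧ q = c₁ * l ∧ r = c₂ • k ∧ s = c₂ * l := by
    by_cases hs : s = 0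
    · -- then q ≠ 0; show a = 0, hence r = 0
      have hq : q ≠ 0 := fun hq => hne (hq.trans hs.symm)
      have ha : a = 0 := by
        have := heq2
        rw [hs, mul_zero, add_zero] at this
        exact (mul_eq_zero.mp this).resolve_right hq
      have hb : b ≠ 0 := hab.resolve_left (fun h => h ha)
      have hr : r = 0 := by
        rw [ha, zero_smul, zero_add] at heq1
        simpa [hb] using smul_eq_zero.mp heq1
      exact ⟨p, q, 1, 0, hq, by simp, by simp, by simp [hr], by simp [hs]⟩
    · -- s ≠ 0; show a ≠ 0, so (p,q) = (-b/a) • (r,s)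
      have ha : a ≠ 0 := by
        rintro rfl
        have hb : b ≠ 0 := hab.resolve_left (fun h => h rfl)
        rw [zero_mul, zero_add] at heq2
        exact hs ((mul_eq_zero.mp heq2).resolve_left hb)
      refine ⟨r, s, -(b / a), 1, hs, ?_, ?_, by simp, by simp⟩
      · have h : a⁻¹ • (a • p + b • r) = 0 := by rw [heq1, smul_zero]
        rw [smul_add, smul_smul, smul_smul, inv_mul_cancel₀ ha, one_smul] at h
        have : p = -(a⁻¹ * b) • r := by
          rw [neg_smul, eq_neg_iff_add_eq_zero]; exact h
        rw [this, div_eq_inv_mul]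
      · field_simp
        linarith
  obtain ⟨k, l, c₁, c₂, hl, hp, hq, hr, hs⟩ := main
  subst hp hq hr hs
  have hll : 0 < l * l := mul_self_pos.mpr hl
  have hc12 : c₁ * c₂ ≤ 0 := by nlinarith [hqs]
  have hcne : c₁ ≠ c₂ := fun h => hne (by rw [h])
  have h0 : α ((0 : Fin m → ℝ), c₁) ((0 : Fin m → ℝ), c₂) = 0 := by
    rw [hstruct _ _ _ _ hc12 hcne]; simp
  have hL := hequi (shearMap m k l) (shearMap_bij m k l hl)
    (by intro v hv; simp [shearMap, hv]) (0, c₁) (0, c₂) hc12 hcne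
  rw [h0] at hL
  have hL1 : shearMap m k l (0, c₁) = (c₁ • k, c₁ * l) := by simp [shearMap]
  have hL2 : shearMap m k l (0, c₂) = (c₂ • k, c₂ * l) := by simp [shearMap]
  have hz : shearMap m k l ((0 : Fin m → ℝ), (0 : ℝ)) = 0 := by simp [shearMap]
  rw [hL1, hL2, hz] at hL
  exact (congrArg Prod.fst hL).symm
end

section
/- (Characterization of the Filippov combination.) Let α : D → ℝ^{n-1}, D = {((p,q),(r,s)) ∈ ℝⁿ × ℝⁿ : q·s ≤ 0, q ≠ s}, satisfy: (1) α((p,q),(r,s)) = A(q,s)·p + B(q,s)·r with A, B matrix-valued and 0-homogeneous in (q,s); (2) α vanishes on linearly dependent pairs; (3) for all p and sequences (qₘ, sₘ) → (0,0) with qₘsₘ ≤ 0, qₘ ≠ sₘ, α((p,qₘ),(p,sₘ)) → p. Then α((p,q),(r,s)) = (s/(s−q))·p + (q/(q−s))·r for all ((p,q),(r,s)) ∈ D. -/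
/-!
Scaling `(q, s)` along the ray `k ↦ (q / (k + 1), s / (k + 1))` leaves `A q s` and `B q s`
unchanged while driving `(q, s)` to `0`, so the limit condition forces `A q s + B q s = id`.
The linearly dependent pair `((q • v, q), (s • v, s))` gives `q • A q s v + s • B q s v = 0`.
Since `q ≠ s`, these two linear relations determine `A q s v` and `B q s v` as the stated
multiples of `v`.
-/

open Filter Topology

theorem eq_smul_of_add_eq_of_smul_add_smul_eq_zero {K E : Type*} [Field K] [AddCommGroup E]
    [Module K E] {q s : K} (hqs : q ≠ s) {a b v : E} (hsum : a + b = v)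
    (hcomb : q • a + s • b = 0) :
    a = (s / (s - q)) • v ∧ b = (q / (q - s)) • v := by
  have h₁ : q - s ≠ 0 := sub_ne_zero.mpr hqs
  have h₂ : s - q ≠ 0 := sub_ne_zero.mpr hqs.symm
  constructor
  · linear_combination (norm := skip) (-s / (q - s)) • hsum + (1 / (q - s)) • hcomb
    match_scalars <;> field_simp <;> ring
  · linear_combination (norm := skip) (q / (q - s)) • hsum - (1 / (q - s)) • hcomb
    match_scalars <;> field_simp <;> ring

theorem mul_mul_mul_nonpos_of_mul_nonpos {q s : ℝ} (k : ℝ) (h : q * s ≤ 0) :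
    k * q * (k * s) ≤ 0 := by
  rw [mul_mul_mul_comm]
  exact mul_nonpos_of_nonneg_of_nonpos (mul_self_nonneg k) h

theorem apply_add_apply_eq_self_of_tendsto {E : Type*} [AddCommGroup E] [Module ℝ E]
    [TopologicalSpace E] [T2Space E] {α : E × ℝ → E × ℝ → E} {A B : ℝ → ℝ → E →ₗ[ℝ] E}
    (hstruct : ∀ (p r : E) (q s : ℝ), q * s ≤ 0 → q ≠ s → α (p, q) (r, s) = A q s p + B q s r)
    (hhom : ∀ (k q s : ℝ), 0 < k → q * s ≤ 0 → q ≠ s →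
      A (k * q) (k * s) = A q s ∧ B (k * q) (k * s) = B q s)
    (hlim : ∀ (p : E) (qm sm : ℕ → ℝ), Tendsto qm atTop (𝓝 0) → Tendsto sm atTop (𝓝 0) →
      (∀ k, qm k * sm k ≤ 0 ∧ qm k ≠ sm k) →
      Tendsto (fun k => α (p, qm k) (p, sm k)) atTop (𝓝 p))
    {q s : ℝ} (hqs : q * s ≤ 0) (hne : q ≠ s) (v : E) :
    A q s v + B q s v = v := by
  set c : ℕ → ℝ := fun k => 1 / ((k : ℝ) + 1)
  have hc_pos (k : ℕ) : 0 < c k := by positivity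
  have hc_lim : Tendsto c atTop (𝓝 0) := tendsto_one_div_add_atTop_nhds_zero_nat
  have hdom (k : ℕ) : c k * q * (c k * s) ≤ 0 ∧ c k * q ≠ c k * s :=
    ⟨mul_mul_mul_nonpos_of_mul_nonpos _ hqs, fun h => hne (mul_left_cancel₀ (hc_pos k).ne' h)⟩
  have hconst : (fun k => α (v, c k * q) (v, c k * s)) = fun _ => A q s v + B q s v := by
    funext k
    obtain ⟨hA, hB⟩ := hhom (c k) q s (hc_pos k) hqs hne
    rw [hstruct v v _ _ (hdom k).1 (hdom k).2, hA, hB]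
  have h := hlim v _ _ (by simpa using hc_lim.mul_const q) (by simpa using hc_lim.mul_const s) hdom
  rw [hconst] at h
  exact tendsto_nhds_unique tendsto_const_nhds h

theorem smul_apply_add_smul_apply_eq_zero_of_dependent {E : Type*} [AddCommGroup E] [Module ℝ E]
    {α : E × ℝ → E × ℝ → E} {A B : ℝ → ℝ → E →ₗ[ℝ] E}
    (hstruct : ∀ (p r : E) (q s : ℝ), q * s ≤ 0 → q ≠ s → α (p, q) (r, s) = A q s p + B q s r)
    (hdep : ∀ (p r : E) (q s : ℝ), q * s ≤ 0 → q ≠ s →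
      (∃ a b : ℝ, (a ≠ 0 ∨ b ≠ 0) ∧ a • ((p, q) : E × ℝ) + b • ((r, s) : E × ℝ) = 0) →
      α (p, q) (r, s) = 0)
    {q s : ℝ} (hqs : q * s ≤ 0) (hne : q ≠ s) (v : E) :
    q • A q s v + s • B q s v = 0 := by
  have hdependent : ∃ a b : ℝ, (a ≠ 0 ∨ b ≠ 0) ∧
      a • ((q • v, q) : E × ℝ) + b • ((s • v, s) : E × ℝ) = 0 := by
    refine ⟨s, -q, ?_, ?_⟩
    · by_contra! h
      exact hne (by linarith [h.1, h.2])
    · ext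
      · simp only [Prod.smul_fst, Prod.fst_add, Prod.fst_zero, smul_smul]
        module
      · simp only [Prod.smul_snd, Prod.snd_add, Prod.snd_zero, smul_eq_mul]
        ring
  have h := hdep _ _ q s hqs hne hdependent
  rwa [hstruct _ _ q s hqs hne, map_smul, map_smul] at h

/-- Characterization of the Filippov combination: the structure, 0-homogeneity,
vanishing on linearly dependent pairs, and consistency with the continuous case force
α((p,q),(r,s)) = (s/(s−q))·p + (q/(q−s))·r on the sliding domain. -/
theorem stmt13 (m : ℕ)
    (α : ((Fin m → ℝ) × ℝ) → ((Fin m → ℝ) × ℝ) → (Fin m → ℝ))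
    (A B : ℝ → ℝ → ((Fin m → ℝ) →ₗ[ℝ] (Fin m → ℝ)))
    (hstruct : ∀ (p r : Fin m → ℝ) (q s : ℝ), q * s ≤ 0 → q ≠ s →
      α (p, q) (r, s) = A q s p + B q s r)
    (hhom : ∀ (k q s : ℝ), 0 < k → q * s ≤ 0 → q ≠ s →
      A (k * q) (k * s) = A q s ∧ B (k * q) (k * s) = B q s)
    (hdep : ∀ (p r : Fin m → ℝ) (q s : ℝ), q * s ≤ 0 → q ≠ s →
      (∃ a b : ℝ, (a ≠ 0 ∨ b ≠ 0) ∧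
        a • ((p, q) : (Fin m → ℝ) × ℝ) + b • ((r, s) : (Fin m → ℝ) × ℝ) = 0) →
      α (p, q) (r, s) = 0)
    (hlim : ∀ (p : Fin m → ℝ) (qm sm : ℕ → ℝ),
      Filter.Tendsto qm Filter.atTop (nhds 0) →
      Filter.Tendsto sm Filter.atTop (nhds 0) →
      (∀ k, qm k * sm k ≤ 0 ∧ qm k ≠ sm k) →
      Filter.Tendsto (fun k => α (p, qm k) (p, sm k)) Filter.atTop (nhds p)) :
    ∀ (p r : Fin m → ℝ) (q s : ℝ), q * s ≤ 0 → q ≠ s →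
      α (p, q) (r, s) = (s / (s - q)) • p + (q / (q - s)) • r := by
  intro p r q s hqs hne
  have hsolve (v : Fin m → ℝ) :=
    eq_smul_of_add_eq_of_smul_add_smul_eq_zero hne
      (apply_add_apply_eq_self_of_tendsto hstruct hhom hlim hqs hne v)
      (smul_apply_add_smul_apply_eq_zero_of_dependent hstruct hdep hqs hne v)
  rw [hstruct p r q s hqs hne, (hsolve p).1, (hsolve r).2]
end
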